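/- Let (Ω, F, μ) be a probability space, let a, b, y : Ω → ℝ^n be measurable, and let λ : Ω → ℝ be measurable with λ ≥ 0, such that λ‖a‖², λ‖b‖², and λ‖y‖² are μ-integrable. Define L_IPFM = ∫ λ (‖a − y‖² − ‖b − y‖²) dμ, L_SiD = ∫ λ (‖a − b‖² + ⟨a − b, b − y⟩) dμ, and for α ∈ ℝ set L_SiD^α = L_SiD − α ∫ λ ‖a − b‖² dμ and L_IPFM^α = L_IPFM − (2α − 1) ∫ λ ‖a − b‖² dμ. Then for every α ∈ ℝ, L_SiD^α = (1/2) L_IPFM^α; in particular L_SiD^{1/2} = (1/2) L_IPFM. (Section 3.4: the SiD regularized objective with coefficient α coincides, up to a factor 1/2, with the IPFM objective regularized with coefficient 2α − 1, and the unregularized IPFM objective corresponds exactly to SiD with α = 1/2.) -/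
import Mathlib


open MeasureTheory
open scoped RealInnerProductSpace

/-- Section 3.4: with `L_IPFM = ∫ λ (‖a - y‖² - ‖b - y‖²) dμ`,
`L_SiD = ∫ λ (‖a - b‖² + ⟪a - b, b - y⟫) dμ`,
`L_SiD^α = L_SiD - α ∫ λ ‖a - b‖² dμ` and
`L_IPFM^α = L_IPFM - (2α - 1) ∫ λ ‖a - b‖² dμ`, one has
`L_SiD^α = (1/2) L_IPFM^α` for every `α`; in particular `L_SiD^{1/2} = (1/2) L_IPFM`. -/
theorem sid_alpha_eq_half_ipfm_alpha
    {Ω : Type*} [MeasurableSpace Ω] (μ : Measure Ω) [IsProbabilityMeasure μ]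
    {n : ℕ} (a b y : Ω → EuclideanSpace ℝ (Fin n)) (lam : Ω → ℝ)
    (ha : Measurable a) (hb : Measurable b) (hy : Measurable y)
    (hlam : Measurable lam) (hlam0 : ∀ ω, 0 ≤ lam ω)
    (hia : Integrable (fun ω => lam ω * ‖a ω‖ ^ 2) μ)
    (hib : Integrable (fun ω => lam ω * ‖b ω‖ ^ 2) μ)
    (hiy : Integrable (fun ω => lam ω * ‖y ω‖ ^ 2) μ)
    (L_IPFM L_SiD : ℝ)
    (hIPFM : L_IPFM = ∫ ω, lam ω * (‖a ω - y ω‖ ^ 2 - ‖b ω - y ω‖ ^ 2) ∂μ)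
    (hSiD : L_SiD = ∫ ω, lam ω * (‖a ω - b ω‖ ^ 2 + ⟪a ω - b ω, b ω - y ω⟫) ∂μ) :
    (∀ α : ℝ,
      L_SiD - α * ∫ ω, lam ω * ‖a ω - b ω‖ ^ 2 ∂μ =
        (1 / 2) * (L_IPFM - (2 * α - 1) * ∫ ω, lam ω * ‖a ω - b ω‖ ^ 2 ∂μ)) ∧
    L_SiD - (1 / 2) * ∫ ω, lam ω * ‖a ω - b ω‖ ^ 2 ∂μ = (1 / 2) * L_IPFM := by

  have mab : Integrable (fun ω => lam ω * ‖a ω - b ω‖ ^ 2) μ := by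
    refine Integrable.mono' (((hia.const_mul 2).add (hib.const_mul 2)))
      ((hlam.mul (((ha.sub hb).norm).pow measurable_const)).aestronglyMeasurable)
      (Filter.Eventually.of_forall fun ω => ?_)
    have h1 : ‖a ω - b ω‖ ≤ ‖a ω‖ + ‖b ω‖ := norm_sub_le _ _
    have h2 : (0:ℝ) ≤ ‖a ω - b ω‖ := norm_nonneg _
    have h3 : (0:ℝ) ≤ ‖a ω‖ := norm_nonneg _
    have h4 : (0:ℝ) ≤ ‖b ω‖ := norm_nonneg _
    have h0 := hlam0 ω
    simp only [Pi.add_apply]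
    rw [Real.norm_eq_abs, abs_of_nonneg (by positivity)]
    nlinarith [mul_le_mul_of_nonneg_left (sq_le_sq' (by linarith) h1) h0, mul_nonneg h0 (sq_nonneg (‖a ω‖ - ‖b ω‖))]
  have mipfm : Integrable (fun ω => lam ω * (‖a ω - y ω‖ ^ 2 - ‖b ω - y ω‖ ^ 2)) μ := by
    refine Integrable.mono'
      (((hia.const_mul 2).add (hib.const_mul 2)).add (hiy.const_mul 4))
      ((hlam.mul ((((ha.sub hy).norm).pow measurable_const).sub
        (((hb.sub hy).norm).pow measurable_const))).aestronglyMeasurable)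
      (Filter.Eventually.of_forall fun ω => ?_)
    have h1 : ‖a ω - y ω‖ ≤ ‖a ω‖ + ‖y ω‖ := norm_sub_le _ _
    have h2 : ‖b ω - y ω‖ ≤ ‖b ω‖ + ‖y ω‖ := norm_sub_le _ _
    have h3 : (0:ℝ) ≤ ‖a ω - y ω‖ := norm_nonneg _
    have h4 : (0:ℝ) ≤ ‖b ω - y ω‖ := norm_nonneg _
    have h5 : (0:ℝ) ≤ ‖a ω‖ := norm_nonneg _
    have h6 : (0:ℝ) ≤ ‖b ω‖ := norm_nonneg _
    have h7 : (0:ℝ) ≤ ‖y ω‖ := norm_nonneg _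
    have h0 := hlam0 ω
    simp only [Pi.add_apply]
    rw [Real.norm_eq_abs, abs_mul, abs_of_nonneg h0]
    rcases abs_cases (‖a ω - y ω‖ ^ 2 - ‖b ω - y ω‖ ^ 2) with ⟨he, _⟩ | ⟨he, _⟩ <;> rw [he] <;>
      nlinarith [mul_le_mul_of_nonneg_left (sq_le_sq' (by linarith : -(‖a ω‖ + ‖y ω‖) ≤ ‖a ω - y ω‖) h1) h0,
        mul_le_mul_of_nonneg_left (sq_le_sq' (by linarith : -(‖b ω‖ + ‖y ω‖) ≤ ‖b ω - y ω‖) h2) h0,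
        mul_nonneg h0 (sq_nonneg ‖a ω - y ω‖), mul_nonneg h0 (sq_nonneg ‖b ω - y ω‖),
        mul_nonneg h0 (sq_nonneg (‖a ω‖ - ‖y ω‖)), mul_nonneg h0 (sq_nonneg (‖b ω‖ - ‖y ω‖))]
  have key : ∀ ω, lam ω * (‖a ω - b ω‖ ^ 2 + ⟪a ω - b ω, b ω - y ω⟫) =
      (1/2) * (lam ω * (‖a ω - y ω‖ ^ 2 - ‖b ω - y ω‖ ^ 2)) +
      (1/2) * (lam ω * ‖a ω - b ω‖ ^ 2) := by
    intro ω
    have hd : a ω - y ω = (a ω - b ω) + (b ω - y ω) := by abel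
    rw [hd, norm_add_sq_real]
    ring
  have hL : L_SiD = (1/2) * L_IPFM + (1/2) * ∫ ω, lam ω * ‖a ω - b ω‖ ^ 2 ∂μ := by
    rw [hSiD, hIPFM]
    calc (∫ ω, lam ω * (‖a ω - b ω‖ ^ 2 + ⟪a ω - b ω, b ω - y ω⟫) ∂μ)
        = ∫ ω, ((1/2) * (lam ω * (‖a ω - y ω‖ ^ 2 - ‖b ω - y ω‖ ^ 2)) +
            (1/2) * (lam ω * ‖a ω - b ω‖ ^ 2)) ∂μ := by
          exact integral_congr_ae (Filter.Eventually.of_forall key)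
      _ = _ := by
          rw [integral_add (mipfm.const_mul _) (mab.const_mul _),
            integral_const_mul, integral_const_mul]
  refine ⟨fun α => ?_, ?_⟩ <;> rw [hL] <;> ring
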